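/- For every ν ≥ 0, the field u(t,x) = e^{−8π²νt}·u₀(x) with u₀(x) = ( sin(2πx₁)·sin(2πx₂), cos(2πx₁)·cos(2πx₂), (√2/(2π))·sin(2πx₁)·cos(2πx₂) ), together with the pressure p(t,x) = e^{−16π²νt}·(1/4)( cos(4πx₁) − cos(4πx₂) ), is a classical solution of the three-dimensional incompressible Navier–Stokes equations with zero force on ℝ × ℝ³: at every (t,x) one has ∂ₜu − νΔu + (u·∇)u + ∇p = 0 and div u = 0. -/

import Mathlib

/-- Partial derivative `∂ᵢ f` of a scalar field on `ℝ³`. -/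
noncomputable def pd3 (i : Fin 3) (f : (Fin 3 → ℝ) → ℝ) (x : Fin 3 → ℝ) : ℝ :=
  fderiv ℝ f x (Pi.single i 1)

/-- The 3D lattice-flow velocity field
`u₀(x) = (sin(2πx₁)sin(2πx₂), cos(2πx₁)cos(2πx₂), (√2/(2π))·sin(2πx₁)cos(2πx₂))`. -/
noncomputable def lattice3U0 (x : Fin 3 → ℝ) : Fin 3 → ℝ :=
  ![Real.sin (2 * Real.pi * x 0) * Real.sin (2 * Real.pi * x 1),
    Real.cos (2 * Real.pi * x 0) * Real.cos (2 * Real.pi * x 1),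
    (Real.sqrt 2 / (2 * Real.pi)) * Real.sin (2 * Real.pi * x 0) * Real.cos (2 * Real.pi * x 1)]

/-- The pressure `p₀(x) = (1/4)(cos(4πx₁) − cos(4πx₂))`. -/
noncomputable def lattice3P0 (x : Fin 3 → ℝ) : ℝ :=
  (1 / 4) * (Real.cos (4 * Real.pi * x 0) - Real.cos (4 * Real.pi * x 1))

/-- The decaying 3D lattice flow `u(t,x) = e^{−8π²νt}·u₀(x)`. -/
noncomputable def lattice3U (ν t : ℝ) (x : Fin 3 → ℝ) : Fin 3 → ℝ :=
  fun i => Real.exp (-8 * Real.pi ^ 2 * ν * t) * lattice3U0 x i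

/-- The associated pressure `p(t,x) = e^{−16π²νt}·p₀(x)`. -/
noncomputable def lattice3P (ν t : ℝ) (x : Fin 3 → ℝ) : ℝ :=
  Real.exp (-16 * Real.pi ^ 2 * ν * t) * lattice3P0 x

/-!
Each velocity component is a product `f(x₁)·g(x₂)` of modes `A sin(2πs) + B cos(2πs)`, which
solve `f'' = -4π² f`, so every component of `u₀` is an eigenfunction of `Δ` with eigenvalue
`-8π²`; hence `∂ₜu = νΔu` and the viscous terms cancel. After factoring out `e^{-16π²νt}` what
remains is the steady Euler identity `(u₀·∇)u₀ + ∇p₀ = 0`, which reduces to `sin² + cos² = 1`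
and `sin(4πs) = 2 sin(2πs) cos(2πs)`; `div u₀ = 0` is a direct computation.
-/

open Real

lemma pd3_const_mul (c : ℝ) (F : (Fin 3 → ℝ) → ℝ) (j : Fin 3) (x : Fin 3 → ℝ) :
    pd3 j (fun y => c * F y) x = c * pd3 j F x := by
  change fderiv ℝ (c • F) x _ = _
  rw [fderiv_const_smul_field]
  rfl

lemma pd3_const (c : ℝ) (j : Fin 3) : pd3 j (fun _ => c) = 0 := by
  funext x; simp [pd3]

section Separable

variable {f f' g g' : ℝ → ℝ}

lemma hasFDerivAt_comp_apply {a : ℝ} {x : Fin 3 → ℝ} (i : Fin 3) (hf : HasDerivAt f a (x i)) :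
    HasFDerivAt (fun y : Fin 3 → ℝ => f (y i))
      (a • (ContinuousLinearMap.proj i : (Fin 3 → ℝ) →L[ℝ] ℝ)) x :=
  hf.comp_hasFDerivAt x (hasFDerivAt_apply (𝕜 := ℝ) i x)

lemma pd3_comp_mul_comp (hf : ∀ s, HasDerivAt f (f' s) s) (hg : ∀ s, HasDerivAt g (g' s) s)
    (j : Fin 3) :
    pd3 j (fun y => f (y 0) * g (y 1))
      = fun y => ![f' (y 0) * g (y 1), f (y 0) * g' (y 1), 0] j := by
  funext y
  rw [pd3, (((hasFDerivAt_comp_apply 0 (hf _)).fun_mul (hasFDerivAt_comp_apply 1 (hg _)))).fderiv]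
  fin_cases j <;> simp [mul_comm]

lemma pd3_comp_add_comp (hf : ∀ s, HasDerivAt f (f' s) s) (hg : ∀ s, HasDerivAt g (g' s) s)
    (j : Fin 3) :
    pd3 j (fun y => f (y 0) + g (y 1)) = fun y => ![f' (y 0), g' (y 1), 0] j := by
  funext y
  rw [pd3, (((hasFDerivAt_comp_apply 0 (hf _)).fun_add (hasFDerivAt_comp_apply 1 (hg _)))).fderiv]
  fin_cases j <;> simp

lemma sum_pd3_pd3_comp_mul_comp {f'' g'' : ℝ → ℝ} (hf : ∀ s, HasDerivAt f (f' s) s)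
    (hf' : ∀ s, HasDerivAt f' (f'' s) s) (hg : ∀ s, HasDerivAt g (g' s) s)
    (hg' : ∀ s, HasDerivAt g' (g'' s) s) (x : Fin 3 → ℝ) :
    ∑ j, pd3 j (pd3 j (fun y => f (y 0) * g (y 1))) x
      = f'' (x 0) * g (x 1) + f (x 0) * g'' (x 1) := by
  simp only [Fin.sum_univ_three, pd3_comp_mul_comp hf hg]
  simp [pd3_comp_mul_comp hf' hg, pd3_comp_mul_comp hf hg', pd3_const]

end Separable

noncomputable def trigMode (k A B s : ℝ) : ℝ := A * sin (k * s) + B * cos (k * s)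

lemma hasDerivAt_trigMode (k A B s : ℝ) :
    HasDerivAt (trigMode k A B) (trigMode k (-(k * B)) (k * A) s) s := by
  have hks := (hasDerivAt_id' s).const_mul k
  exact ((hks.sin.const_mul A).fun_add (hks.cos.const_mul B)).congr_deriv
    (by simp only [trigMode]; ring)

lemma sum_pd3_pd3_trigMode_mul_trigMode (k A B C D : ℝ) (x : Fin 3 → ℝ) :
    ∑ j, pd3 j (pd3 j (fun y => trigMode k A B (y 0) * trigMode k C D (y 1))) x
      = -(2 * k ^ 2) * (trigMode k A B (x 0) * trigMode k C D (x 1)) := by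
  rw [sum_pd3_pd3_comp_mul_comp (hasDerivAt_trigMode k A B) (hasDerivAt_trigMode k _ _)
    (hasDerivAt_trigMode k C D) (hasDerivAt_trigMode k _ _)]
  simp only [trigMode]
  ring

lemma lattice3U0_apply_eq_trigMode (y : Fin 3 → ℝ) (i : Fin 3) :
    lattice3U0 y i = trigMode (2 * π) (![1, 0, √2 / (2 * π)] i) (![0, 1, 0] i) (y 0)
      * trigMode (2 * π) (![1, 0, 0] i) (![0, 1, 1] i) (y 1) := by
  fin_cases i <;> simp [lattice3U0, trigMode, mul_assoc]

lemma sum_pd3_pd3_lattice3U0 (i : Fin 3) (x : Fin 3 → ℝ) :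
    ∑ j, pd3 j (pd3 j (fun y => lattice3U0 y i)) x = -(8 * π ^ 2) * lattice3U0 x i := by
  simp only [lattice3U0_apply_eq_trigMode, sum_pd3_pd3_trigMode_mul_trigMode]
  ring

lemma lattice3P0_eq_trigMode :
    lattice3P0
      = fun y => trigMode (4 * π) 0 (1 / 4) (y 0) + trigMode (4 * π) 0 (-(1 / 4)) (y 1) := by
  funext y
  simp only [lattice3P0, trigMode]
  ring

lemma sum_pd3_lattice3U0 (x : Fin 3 → ℝ) : ∑ i, pd3 i (fun y => lattice3U0 y i) x = 0 := by
  simp only [lattice3U0_apply_eq_trigMode,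
    pd3_comp_mul_comp (hasDerivAt_trigMode _ _ _) (hasDerivAt_trigMode _ _ _), Fin.sum_univ_three]
  simp only [trigMode, Matrix.cons_val_zero, Matrix.cons_val_one, Matrix.cons_val]
  ring

lemma lattice3U0_convective_add_pd3_lattice3P0 (i : Fin 3) (x : Fin 3 → ℝ) :
    ∑ j, lattice3U0 x j * pd3 j (fun y => lattice3U0 y i) x + pd3 i lattice3P0 x = 0 := by
  simp only [lattice3U0_apply_eq_trigMode,
    pd3_comp_mul_comp (hasDerivAt_trigMode _ _ _) (hasDerivAt_trigMode _ _ _), Fin.sum_univ_three,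
    lattice3P0_eq_trigMode,
    pd3_comp_add_comp (hasDerivAt_trigMode _ _ _) (hasDerivAt_trigMode _ _ _)]
  have sin_four_pi_mul (s : ℝ) : sin (4 * π * s) = 2 * sin (2 * π * s) * cos (2 * π * s) := by
    rw [← sin_two_mul]; ring_nf
  fin_cases i <;> simp only [trigMode, Matrix.cons_val_zero, Matrix.cons_val_one,
    Matrix.cons_val, Fin.zero_eta, Fin.mk_one, Fin.reduceFinMk, sin_four_pi_mul]
  · linear_combination
      (2 * π * sin (2 * π * x 0) * cos (2 * π * x 0)) * sin_sq_add_cos_sq (2 * π * x 1)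
  · linear_combination
      (-(2 * π) * sin (2 * π * x 1) * cos (2 * π * x 1)) * sin_sq_add_cos_sq (2 * π * x 0)
  · ring

lemma deriv_lattice3U (ν t : ℝ) (x : Fin 3 → ℝ) (i : Fin 3) :
    deriv (fun s => lattice3U ν s x i) t = -8 * π ^ 2 * ν * lattice3U ν t x i :=
  ((((hasDerivAt_id' t).const_mul (-8 * π ^ 2 * ν)).exp.mul_const (lattice3U0 x i)).congr_deriv
    (by simp only [lattice3U]; ring)).deriv

lemma pd3_lattice3U (ν t : ℝ) (i j : Fin 3) :
    pd3 j (fun y => lattice3U ν t y i)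
      = fun y => exp (-8 * π ^ 2 * ν * t) * pd3 j (fun z => lattice3U0 z i) y :=
  funext (pd3_const_mul _ _ j)

lemma pd3_lattice3P (ν t : ℝ) (i : Fin 3) :
    pd3 i (lattice3P ν t) = fun x => exp (-16 * π ^ 2 * ν * t) * pd3 i lattice3P0 x :=
  funext (pd3_const_mul _ _ i)

theorem lattice3_solves_navier_stokes_general (ν : ℝ) :
    (∀ (t : ℝ) (x : Fin 3 → ℝ) (i : Fin 3),
      deriv (fun s => lattice3U ν s x i) t
        - ν * (∑ j : Fin 3, pd3 j (fun y => pd3 j (fun z => lattice3U ν t z i) y) x)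
        + (∑ j : Fin 3, lattice3U ν t x j * pd3 j (fun y => lattice3U ν t y i) x)
        + pd3 i (lattice3P ν t) x = 0) ∧
    (∀ (t : ℝ) (x : Fin 3 → ℝ),
      (∑ i : Fin 3, pd3 i (fun y => lattice3U ν t y i) x) = 0) := by
  refine ⟨fun t x i => ?_, fun t x => ?_⟩
  · have hΔ := sum_pd3_pd3_lattice3U0 i x
    have hEuler := lattice3U0_convective_add_pd3_lattice3P0 i x
    have hE : exp (-16 * π ^ 2 * ν * t) = exp (-8 * π ^ 2 * ν * t) ^ 2 := by
      rw [← exp_nat_mul]; ring_nf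
    simp only [deriv_lattice3U, pd3_lattice3U, pd3_const_mul, pd3_lattice3P,
      Fin.sum_univ_three] at hΔ hEuler ⊢
    simp only [lattice3U]
    linear_combination (-ν * exp (-8 * π ^ 2 * ν * t)) * hΔ
      + exp (-8 * π ^ 2 * ν * t) ^ 2 * hEuler + pd3 i lattice3P0 x * hE
  · simp only [pd3_lattice3U, ← Finset.mul_sum, sum_pd3_lattice3U0, mul_zero]

/-- for every `ν ≥ 0`, the decaying 3D lattice flow, together with the
pressure `p`, is a classical solution of the 3D incompressible Navier–Stokes
equations with zero force: `∂ₜu − νΔu + (u·∇)u + ∇p = 0` and `div u = 0`. -/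
theorem lattice3_solves_navier_stokes (ν : ℝ) (hν : 0 ≤ ν) :
    (∀ (t : ℝ) (x : Fin 3 → ℝ) (i : Fin 3),
      deriv (fun s => lattice3U ν s x i) t
        - ν * (∑ j : Fin 3, pd3 j (fun y => pd3 j (fun z => lattice3U ν t z i) y) x)
        + (∑ j : Fin 3, lattice3U ν t x j * pd3 j (fun y => lattice3U ν t y i) x)
        + pd3 i (lattice3P ν t) x = 0) ∧
    (∀ (t : ℝ) (x : Fin 3 → ℝ),
      (∑ i : Fin 3, pd3 i (fun y => lattice3U ν t y i) x) = 0) :=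
  lattice3_solves_navier_stokes_general ν
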